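/- arXiv:2006.13889 — 5 statements merged into one kernel-verified Lean document; each statement's English description precedes it below -/
import Mathlib

section
/- Let Z ~ N(μ_z, σ_z²) and Y ~ N(0, σ_y²) be independent, σ_z, σ_y > 0. In the Kyle equilibrium with X(Z) = (σ_y/σ_z)(Z − μ_z) and P(v) = μ_z + (σ_z/(2σ_y)) v, the market maker breaks even in expectation: E[(Z − P(X(Z)+Y))·(X(Z)+Y)] = 0. -/
/-!
With the equilibrium coefficients the product of the insider's intensity `σy/σz` and the price
impact `σz/(2σy)` is `1/2`, so the cross term `(Z - μz) Y` cancels pointwise from the market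
maker's profit, leaving `σy/(2σz) (Z - μz)² - σz/(2σy) Y²`. Its expectation is
`σy/(2σz) σz² - σz/(2σy) σy² = 0`.
-/

open MeasureTheory ProbabilityTheory
open scoped NNReal

section MapEqGaussianReal

variable {Ω : Type*} [MeasurableSpace Ω] {μ : Measure Ω} {Z : Ω → ℝ} {m : ℝ} {v : ℝ≥0}

lemma aemeasurable_of_map_eq_gaussianReal (hZ : μ.map Z = gaussianReal m v) :
    AEMeasurable Z μ :=
  .of_map_ne_zero (by simp [hZ, NeZero.ne])

lemma integrable_sq_sub_of_map_eq_gaussianReal (hZ : μ.map Z = gaussianReal m v) :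
    Integrable (fun ω ↦ (Z ω - m) ^ 2) μ := by
  have h : Integrable (fun x ↦ (x - m) ^ 2) (gaussianReal m v) :=
    ((memLp_id_gaussianReal 2).sub (memLp_const m)).integrable_sq
  rw [← hZ] at h
  exact (integrable_map_measure (by fun_prop) (aemeasurable_of_map_eq_gaussianReal hZ)).mp h

lemma integral_sq_sub_of_map_eq_gaussianReal (hZ : μ.map Z = gaussianReal m v) :
    ∫ ω, (Z ω - m) ^ 2 ∂μ = v := calc
  ∫ ω, (Z ω - m) ^ 2 ∂μ = ∫ x, (x - m) ^ 2 ∂(gaussianReal m v) := by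
    rw [← hZ, integral_map (aemeasurable_of_map_eq_gaussianReal hZ) (by fun_prop)]
  _ = Var[fun x ↦ x; gaussianReal m v] := by
    rw [variance_eq_integral aemeasurable_id', integral_id_gaussianReal]
  _ = v := variance_fun_id_gaussianReal

end MapEqGaussianReal

theorem kyle_market_maker_breaks_even_general
    {Ω : Type*} [MeasurableSpace Ω] (μpr : Measure Ω)
    (Z Y : Ω → ℝ)
    (μz σz σy : ℝ) (hσz : 0 < σz) (hσy : 0 < σy)
    (hZ : Measure.map Z μpr = gaussianReal μz (Real.toNNReal (σz ^ 2)))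
    (hY : Measure.map Y μpr = gaussianReal 0 (Real.toNNReal (σy ^ 2)))
    (X : ℝ → ℝ) (hX : ∀ z, X z = (σy / σz) * (z - μz))
    (P : ℝ → ℝ) (hP : ∀ v, P v = μz + (σz / (2 * σy)) * v) :
    (∫ ω, (Z ω - P (X (Z ω) + Y ω)) * (X (Z ω) + Y ω) ∂μpr) = 0 := by
  have profit_eq : ∀ ω, (Z ω - P (X (Z ω) + Y ω)) * (X (Z ω) + Y ω)
      = σy / (2 * σz) * (Z ω - μz) ^ 2 - σz / (2 * σy) * (Y ω - 0) ^ 2 := by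
    intro ω
    rw [hX, hP]
    field_simp
    ring
  simp_rw [profit_eq]
  rw [integral_sub ((integrable_sq_sub_of_map_eq_gaussianReal hZ).const_mul _)
      ((integrable_sq_sub_of_map_eq_gaussianReal hY).const_mul _),
    integral_const_mul, integral_const_mul, integral_sq_sub_of_map_eq_gaussianReal hZ,
    integral_sq_sub_of_map_eq_gaussianReal hY, Real.coe_toNNReal _ (sq_nonneg σz),
    Real.coe_toNNReal _ (sq_nonneg σy)]
  field_simp
  ring

/-- In the Kyle equilibrium the market maker breaks even in expectation:
`E[(Z − P(X(Z)+Y))·(X(Z)+Y)] = 0`. -/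
theorem kyle_market_maker_breaks_even
    {Ω : Type*} [MeasurableSpace Ω] (μpr : Measure Ω) [IsProbabilityMeasure μpr]
    (Z Y : Ω → ℝ) (hZm : Measurable Z) (hYm : Measurable Y)
    (μz σz σy : ℝ) (hσz : 0 < σz) (hσy : 0 < σy)
    (hZ : Measure.map Z μpr = gaussianReal μz (Real.toNNReal (σz ^ 2)))
    (hY : Measure.map Y μpr = gaussianReal 0 (Real.toNNReal (σy ^ 2)))
    (hindep : IndepFun Z Y μpr)
    (X : ℝ → ℝ) (hX : ∀ z, X z = (σy / σz) * (z - μz))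
    (P : ℝ → ℝ) (hP : ∀ v, P v = μz + (σz / (2 * σy)) * v) :
    (∫ ω, (Z ω - P (X (Z ω) + Y ω)) * (X (Z ω) + Y ω) ∂μpr) = 0 :=
  kyle_market_maker_breaks_even_general μpr Z Y μz σz σy hσz hσy hZ hY X hX P hP
end

section
/- Let Z ~ N(μ_z, σ_z²) and Y ~ N(0, σ_y²) be independent, σ_z, σ_y > 0. In the Kyle equilibrium with X(Z) = (σ_y/σ_z)(Z − μ_z) and P(v) = μ_z + (σ_z/(2σ_y)) v, the insider's unconditional expected profit equals σ_y σ_z / 2. -/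
/-!
Write `W = Z - E Z`. For a linear strategy `β W` and a linear pricing rule `E Z + γ v`
the profit is the pointwise polynomial `β (1 - γ β) W² - β γ W Y`. Independence splits
`E[W Y]` into `E W · E Y = 0`, so the expected profit is `β (1 - γ β) Var Z`, which the Kyle
coefficients `β = σy/σz`, `γ = σz/(2σy)` turn into `σy σz / 2`.
-/

open MeasureTheory ProbabilityTheory

open scoped NNReal

section

variable {Ω : Type*} [MeasurableSpace Ω] {P : Measure Ω}

lemma ProbabilityTheory.HasLaw.memLp {X : Ω → ℝ} {μ : Measure ℝ} {p : ENNReal}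
    (hX : HasLaw X μ P) (hμ : MemLp id p μ) : MemLp X p P := by
  rw [← hX.map_eq] at hμ
  exact (memLp_map_measure_iff aestronglyMeasurable_id hX.aemeasurable).mp hμ

lemma ProbabilityTheory.HasLaw.memLp_gaussianReal {X : Ω → ℝ} {m : ℝ} {v : ℝ≥0}
    (hX : HasLaw X (gaussianReal m v) P) (p : ℝ≥0) : MemLp X p P :=
  hX.memLp (memLp_id_gaussianReal p)

lemma integral_linear_strategy_profit [IsFiniteMeasure P] {Z Y : Ω → ℝ} (hZ : MemLp Z 2 P)
    (hY : Integrable Y P) (hY0 : P[Y] = 0) (hZY : IndepFun Z Y P) (β γ : ℝ) :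
    ∫ ω, β * (Z ω - P[Z]) * (Z ω - (P[Z] + γ * (β * (Z ω - P[Z]) + Y ω))) ∂P
      = β * (1 - γ * β) * Var[Z; P] := by
  set W : Ω → ℝ := fun ω ↦ Z ω - P[Z]
  have hW : MemLp W 2 P := hZ.sub (memLp_const _)
  have hWY : IndepFun W Y P := hZY.comp (measurable_id.sub_const _) measurable_id
  have hEWY : ∫ ω, W ω * Y ω ∂P = 0 := by
    rw [hWY.integral_fun_mul_eq_mul_integral hW.aestronglyMeasurable hY.1, hY0, mul_zero]
  have hVar : ∫ ω, W ω ^ 2 ∂P = Var[Z; P] :=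
    (variance_eq_integral hZ.aestronglyMeasurable.aemeasurable).symm
  calc ∫ ω, β * W ω * (Z ω - (P[Z] + γ * (β * W ω + Y ω))) ∂P
      = ∫ ω, (β * (1 - γ * β) * W ω ^ 2 - β * γ * (W ω * Y ω)) ∂P := by
        congr 1 with ω
        simp only [W]
        ring
    _ = β * (1 - γ * β) * Var[Z; P] := by
        have hWYint : Integrable (fun ω ↦ W ω * Y ω) P :=
          hWY.integrable_mul (hW.integrable one_le_two) hY
        rw [integral_sub (hW.integrable_sq.const_mul _) (hWYint.const_mul _),
          integral_const_mul, integral_const_mul, hVar, hEWY, mul_zero, sub_zero]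

end

/-- In the Kyle equilibrium the insider's unconditional expected profit
`E[X(Z)·(Z − P(X(Z)+Y))]` equals `σy σz / 2`. -/
theorem kyle_insider_expected_profit
    {Ω : Type*} [MeasurableSpace Ω] (μpr : Measure Ω) [IsProbabilityMeasure μpr]
    (Z Y : Ω → ℝ) (hZm : Measurable Z) (hYm : Measurable Y)
    (μz σz σy : ℝ) (hσz : 0 < σz) (hσy : 0 < σy)
    (hZ : Measure.map Z μpr = gaussianReal μz (Real.toNNReal (σz ^ 2)))
    (hY : Measure.map Y μpr = gaussianReal 0 (Real.toNNReal (σy ^ 2)))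
    (hindep : IndepFun Z Y μpr)
    (X : ℝ → ℝ) (hX : ∀ z, X z = (σy / σz) * (z - μz))
    (P : ℝ → ℝ) (hP : ∀ v, P v = μz + (σz / (2 * σy)) * v) :
    (∫ ω, X (Z ω) * (Z ω - P (X (Z ω) + Y ω)) ∂μpr) = σy * σz / 2 := by
  have hZlaw : HasLaw Z (gaussianReal μz (σz ^ 2).toNNReal) μpr := ⟨hZm.aemeasurable, hZ⟩
  have hYlaw : HasLaw Y (gaussianReal 0 (σy ^ 2).toNNReal) μpr := ⟨hYm.aemeasurable, hY⟩
  have hEZ : μpr[Z] = μz := by rw [hZlaw.integral_eq, integral_id_gaussianReal]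
  have hVarZ : Var[Z; μpr] = σz ^ 2 := by
    rw [hZlaw.variance_eq, variance_id_gaussianReal, Real.coe_toNNReal _ (sq_nonneg σz)]
  have hEY : μpr[Y] = 0 := by rw [hYlaw.integral_eq, integral_id_gaussianReal]
  have hYint : Integrable Y μpr := memLp_one_iff_integrable.mp (hYlaw.memLp_gaussianReal 1)
  calc ∫ ω, X (Z ω) * (Z ω - P (X (Z ω) + Y ω)) ∂μpr
      = ∫ ω, σy / σz * (Z ω - μpr[Z])
          * (Z ω - (μpr[Z] + σz / (2 * σy) * (σy / σz * (Z ω - μpr[Z]) + Y ω))) ∂μpr := by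
        simp only [hX, hP, hEZ]
    _ = σy / σz * (1 - σz / (2 * σy) * (σy / σz)) * Var[Z; μpr] :=
        integral_linear_strategy_profit (hZlaw.memLp_gaussianReal 2) hYint hEY hindep _ _
    _ = σy * σz / 2 := by
        rw [hVarZ]
        field_simp
        ring
end

section
/- Let Z ~ N(μ_z, σ_z²) and Y ~ N(0, σ_y²) be independent, σ_z, σ_y > 0. In the Kyle equilibrium, the conditional variance of Z given the total order flow V = (σ_y/σ_z)(Z − μ_z) + Y equals σ_z²/2; that is, exactly half of the variance of the asset value is resolved by observing the order flow. -/
/-!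
For a jointly Gaussian pair `(X, V)` with `Var V ≠ 0`, the regression residual
`R = X - (Cov(X, V) / Var V) V` is uncorrelated with `V`, hence independent of it. So
`E[X | V]` is the affine regression of `X` on `V`, `X - E[X | V] = R - E R`, and the conditional
variance is the constant `Var R = Var X - Cov(X, V)² / Var V`. In the Kyle model,
`Cov(Z, V) = σy σz` and `Var V = 2 σy²`, which leaves `σz² / 2`.
-/

open MeasureTheory ProbabilityTheory

namespace ProbabilityTheory

variable {Ω : Type*} {mΩ : MeasurableSpace Ω} {P : Measure Ω}

lemma HasGaussianLaw.fun_add_const {E : Type*} [NormedAddCommGroup E] [NormedSpace ℝ E]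
    [MeasurableSpace E] [BorelSpace E] {X : Ω → E} (hX : HasGaussianLaw X P) (c : E) :
    HasGaussianLaw (fun ω ↦ X ω + c) P where
  isGaussian_map := by
    have := hX.isGaussian_map
    change IsGaussian (P.map ((· + c) ∘ X))
    rw [← AEMeasurable.map_map_of_aemeasurable (by fun_prop) hX.aemeasurable]
    infer_instance

lemma IndepFun.hasGaussianLaw_prodMk_const_mul_sub_add {X Y : Ω → ℝ} (hX : HasGaussianLaw X P)
    (hY : HasGaussianLaw Y P) (hXY : IndepFun X Y P) (c a : ℝ) :
    HasGaussianLaw (fun ω ↦ (X ω, c * (X ω - a) + Y ω)) P := by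
  let L : ℝ × ℝ →L[ℝ] ℝ × ℝ := (ContinuousLinearMap.fst ℝ ℝ ℝ).prod
    (c • ContinuousLinearMap.fst ℝ ℝ ℝ + ContinuousLinearMap.snd ℝ ℝ ℝ)
  have h_affine : (fun ω ↦ (X ω, c * (X ω - a) + Y ω))
      = fun ω ↦ L (X ω, Y ω) + (0, -(c * a)) := by
    ext ω
    · simp [L]
    · simp [L]
      ring
  exact h_affine ▸ ((hXY.hasGaussianLaw hX hY).map_fun L).fun_add_const _

lemma integral_sub_const_mul {X V : Ω → ℝ} (hX : Integrable X P) (hV : Integrable V P)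
    (β : ℝ) :
    P[fun ω ↦ X ω - β * V ω] = P[X] - β * P[V] := by
  rw [integral_sub hX (hV.const_mul β), integral_const_mul]

lemma IndepFun.condExp_comap_comp_ae_eq {β γ : Type*} [MeasurableSpace β] [MeasurableSpace γ]
    [IsFiniteMeasure P] {R : Ω → β} {V : Ω → γ} (hR : Measurable R) (hV : Measurable V)
    (hRV : IndepFun R V P) {φ : β → ℝ} (hφ : Measurable φ) :
    P[fun ω ↦ φ (R ω) | MeasurableSpace.comap V inferInstance] =ᵐ[P]
      fun _ ↦ P[fun ω ↦ φ (R ω)] :=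
  condExp_indep_eq hR.comap_le hV.comap_le (hφ.comp (comap_measurable R)).stronglyMeasurable hRV

lemma HasGaussianLaw.indepFun_sub_regression {X V : Ω → ℝ}
    (h : HasGaussianLaw (fun ω ↦ (X ω, V ω)) P) (hV : Var[V; P] ≠ 0) :
    IndepFun (fun ω ↦ X ω - cov[X, V; P] / Var[V; P] * V ω) V P := by
  have := h.isProbabilityMeasure
  set β := cov[X, V; P] / Var[V; P]
  let L : ℝ × ℝ →L[ℝ] ℝ × ℝ :=
    (ContinuousLinearMap.fst ℝ ℝ ℝ - β • ContinuousLinearMap.snd ℝ ℝ ℝ).prod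
      (ContinuousLinearMap.snd ℝ ℝ ℝ)
  refine HasGaussianLaw.indepFun_of_covariance_eq_zero (h.map_fun L) ?_
  rw [covariance_fun_sub_left h.fst.memLp_two (h.snd.memLp_two.const_mul β) h.snd.memLp_two,
    covariance_const_mul_left, covariance_self h.snd.aemeasurable]
  exact sub_eq_zero.mpr (div_mul_cancel₀ _ hV).symm

variable [IsProbabilityMeasure P]

lemma IndepFun.covariance_const_mul_sub_add {X Y : Ω → ℝ} (hX : MemLp X 2 P) (hY : MemLp Y 2 P)
    (hXY : IndepFun X Y P) (c a : ℝ) :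
    cov[X, fun ω ↦ c * (X ω - a) + Y ω; P] = c * Var[X; P] := by
  have hcX : MemLp (fun ω ↦ c * (X ω - a)) 2 P := (hX.sub (memLp_const a)).const_mul c
  rw [show (fun ω ↦ c * (X ω - a) + Y ω) = (fun ω ↦ c * (X ω - a)) + Y from rfl,
    covariance_add_right hX hcX hY, hXY.covariance_eq_zero hX hY, covariance_const_mul_right,
    covariance_sub_const_right (hX.integrable one_le_two), covariance_self hX.aemeasurable,
    add_zero]

lemma IndepFun.variance_const_mul_sub_add {X Y : Ω → ℝ} (hX : MemLp X 2 P) (hY : MemLp Y 2 P)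
    (hXY : IndepFun X Y P) (c a : ℝ) :
    Var[fun ω ↦ c * (X ω - a) + Y ω; P] = c ^ 2 * Var[X; P] + Var[Y; P] := by
  have hcX : MemLp (fun ω ↦ c * (X ω - a)) 2 P := (hX.sub (memLp_const a)).const_mul c
  have hcXY : IndepFun (fun ω ↦ c * (X ω - a)) Y P :=
    hXY.comp (φ := fun x ↦ c * (x - a)) (ψ := id) (by fun_prop) measurable_id
  rw [show (fun ω ↦ c * (X ω - a) + Y ω) = (fun ω ↦ c * (X ω - a)) + Y from rfl,
    hcXY.variance_add hcX hY, variance_const_mul, variance_sub_const hX.aestronglyMeasurable]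

lemma HasGaussianLaw.condExp_comap_ae_eq {X V : Ω → ℝ} (hXm : Measurable X)
    (hVm : Measurable V) (h : HasGaussianLaw (fun ω ↦ (X ω, V ω)) P)
    (hV : Var[V; P] ≠ 0) :
    P[X | MeasurableSpace.comap V inferInstance] =ᵐ[P]
      fun ω ↦ P[X] + cov[X, V; P] / Var[V; P] * (V ω - P[V]) := by
  set β := cov[X, V; P] / Var[V; P]
  set R := fun ω ↦ X ω - β * V ω
  have hβV_int : Integrable (fun ω ↦ β * V ω) P := h.snd.integrable.const_mul β
  have hR_int : Integrable R P := h.fst.integrable.sub hβV_int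
  have hX : X = R + fun ω ↦ β * V ω := by ext; simp [R]
  have hR : P[R | MeasurableSpace.comap V inferInstance] =ᵐ[P] fun _ ↦ P[R] :=
    (h.indepFun_sub_regression hV).condExp_comap_comp_ae_eq (hXm.sub (hVm.const_mul β)) hVm
      measurable_id
  have hβV : P[fun ω ↦ β * V ω | MeasurableSpace.comap V inferInstance] = fun ω ↦ β * V ω :=
    condExp_of_stronglyMeasurable hVm.comap_le
      ((comap_measurable V).const_mul β).stronglyMeasurable hβV_int
  have hER : P[R] = P[X] - β * P[V] :=
    integral_sub_const_mul h.fst.integrable h.snd.integrable β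
  nth_rw 1 [hX]
  filter_upwards [condExp_add hR_int hβV_int (MeasurableSpace.comap V inferInstance), hR]
    with ω hadd hRω
  rw [hadd, Pi.add_apply, hRω, hβV, hER]
  ring

theorem HasGaussianLaw.condExp_sq_sub_condExp_comap_ae_eq {X V : Ω → ℝ} (hXm : Measurable X)
    (hVm : Measurable V) (h : HasGaussianLaw (fun ω ↦ (X ω, V ω)) P) (hV : Var[V; P] ≠ 0) :
    P[fun ω ↦ (X ω - P[X | MeasurableSpace.comap V inferInstance] ω) ^ 2 |
        MeasurableSpace.comap V inferInstance] =ᵐ[P]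
      fun _ ↦ Var[X; P] - cov[X, V; P] ^ 2 / Var[V; P] := by
  set β := cov[X, V; P] / Var[V; P]
  set R := fun ω ↦ X ω - β * V ω
  have hRm : Measurable R := hXm.sub (hVm.const_mul β)
  have hER : P[R] = P[X] - β * P[V] :=
    integral_sub_const_mul h.fst.integrable h.snd.integrable β
  have hres : (fun ω ↦ (X ω - P[X | MeasurableSpace.comap V inferInstance] ω) ^ 2)
      =ᵐ[P] fun ω ↦ (R ω - P[R]) ^ 2 := by
    filter_upwards [h.condExp_comap_ae_eq hXm hVm hV] with ω hω
    rw [hω, hER]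
    ring
  have hVarR : Var[R; P] = Var[X; P] - cov[X, V; P] ^ 2 / Var[V; P] := by
    rw [variance_fun_sub h.fst.memLp_two (h.snd.memLp_two.const_mul β), variance_const_mul,
      covariance_const_mul_right]
    simp only [β]
    field_simp
    ring
  refine (condExp_congr_ae hres).trans ?_
  filter_upwards [(h.indepFun_sub_regression hV).condExp_comap_comp_ae_eq hRm hVm
    (φ := fun x ↦ (x - P[R]) ^ 2) (by fun_prop)] with ω hω
  rw [hω, hVarR.symm.trans (variance_eq_integral hRm.aemeasurable)]

end ProbabilityTheory

/-- In the Kyle equilibrium the conditional variance of `Z` given the order flow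
`V = (σy/σz)(Z − μz) + Y` equals `σz²/2`: half the variance is resolved. -/
theorem kyle_conditional_variance
    {Ω : Type*} [MeasurableSpace Ω] (μpr : Measure Ω) [IsProbabilityMeasure μpr]
    (Z Y : Ω → ℝ) (hZm : Measurable Z) (hYm : Measurable Y)
    (μz σz σy : ℝ) (hσz : 0 < σz) (hσy : 0 < σy)
    (hZ : Measure.map Z μpr = gaussianReal μz (Real.toNNReal (σz ^ 2)))
    (hY : Measure.map Y μpr = gaussianReal 0 (Real.toNNReal (σy ^ 2)))
    (hindep : IndepFun Z Y μpr)
    (V : Ω → ℝ) (hV : ∀ ω, V ω = (σy / σz) * (Z ω - μz) + Y ω) :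
    condExp (MeasurableSpace.comap V inferInstance) μpr
        (fun ω => (Z ω - condExp (MeasurableSpace.comap V inferInstance) μpr Z ω) ^ 2)
      =ᵐ[μpr] fun _ => σz ^ 2 / 2 := by
  obtain rfl : V = fun ω ↦ σy / σz * (Z ω - μz) + Y ω := funext hV
  have hZlaw : HasLaw Z _ μpr := ⟨hZm.aemeasurable, hZ⟩
  have hYlaw : HasLaw Y _ μpr := ⟨hYm.aemeasurable, hY⟩
  have hZG := hZlaw.hasGaussianLaw
  have hYG := hYlaw.hasGaussianLaw
  have hVarZ : Var[Z; μpr] = σz ^ 2 := by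
    rw [hZlaw.variance_eq, variance_id_gaussianReal, Real.coe_toNNReal _ (sq_nonneg _)]
  have hVarY : Var[Y; μpr] = σy ^ 2 := by
    rw [hYlaw.variance_eq, variance_id_gaussianReal, Real.coe_toNNReal _ (sq_nonneg _)]
  have hcov : cov[Z, fun ω ↦ σy / σz * (Z ω - μz) + Y ω; μpr] = σy / σz * σz ^ 2 := by
    rw [hindep.covariance_const_mul_sub_add hZG.memLp_two hYG.memLp_two, hVarZ]
  have hVarV :
      Var[fun ω ↦ σy / σz * (Z ω - μz) + Y ω; μpr] = (σy / σz) ^ 2 * σz ^ 2 + σy ^ 2 := by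
    rw [hindep.variance_const_mul_sub_add hZG.memLp_two hYG.memLp_two, hVarZ, hVarY]
  have hZV := hindep.hasGaussianLaw_prodMk_const_mul_sub_add hZG hYG (σy / σz) μz
  filter_upwards [hZV.condExp_sq_sub_condExp_comap_ae_eq hZm (by fun_prop)
    (by rw [hVarV]; positivity)] with ω hω
  rw [hω, hVarZ, hcov, hVarV]
  field_simp
  ring
end

section
/- Let Z ~ N(μ_z, σ_z²) and Y ~ N(0, σ_y²) be independent, σ_z, σ_y > 0. In the Kyle equilibrium, the noise trader's expected loss E[Y·(Z − P(X(Z)+Y))] equals −σ_y σ_z/2; in particular, the insider's expected gain σ_y σ_z/2 is exactly the noise trader's expected loss. -/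
open MeasureTheory ProbabilityTheory
open scoped NNReal

/-!
Write `W = Z - μz`. Since the slopes of `X` and `P` multiply to `1/2`, the mispricing is
`Z - P(X(Z) + Y) = W/2 - λ Y` with `λ = σz/(2σy)`, so both profits are quadratic forms in
`(W, Y)`. Independence kills the cross moment `E[WY]`, leaving `-λσy²` for the noise trader and
`(σy/σz)·σz²/2` for the insider.
-/

namespace ProbabilityTheory

variable {Ω : Type*} {mΩ : MeasurableSpace Ω} {P : Measure Ω}

lemma integral_quadratic_form {U V : Ω → ℝ} (hU : MemLp U 2 P) (hV : MemLp V 2 P)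
    (a b c : ℝ) :
    ∫ ω, (a * U ω ^ 2 + b * (U ω * V ω) + c * V ω ^ 2) ∂P
      = a * ∫ ω, U ω ^ 2 ∂P + b * ∫ ω, U ω * V ω ∂P + c * ∫ ω, V ω ^ 2 ∂P := by
  have hUV : Integrable (fun ω ↦ U ω * V ω) P := hU.integrable_mul hV
  rw [integral_add ((hU.integrable_sq.const_mul a).fun_add (hUV.const_mul b))
      (hV.integrable_sq.const_mul c),
    integral_add (hU.integrable_sq.const_mul a) (hUV.const_mul b),
    integral_const_mul, integral_const_mul, integral_const_mul]

lemma HasLaw.integral_sq_gaussianReal [IsProbabilityMeasure P] {X : Ω → ℝ} {m : ℝ} {v : ℝ≥0}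
    (hX : HasLaw X (gaussianReal m v) P) :
    ∫ ω, X ω ^ 2 ∂P = v + m ^ 2 := by
  have hvar := variance_eq_sub hX.hasGaussianLaw.memLp_two
  rw [hX.variance_eq, variance_id_gaussianReal, hX.integral_eq, integral_id_gaussianReal] at hvar
  simp only [Pi.pow_apply] at hvar
  linarith

end ProbabilityTheory

/-- In the Kyle equilibrium the noise trader's expected profit
`E[Y·(Z − P(X(Z)+Y))]` equals `−σyσz/2`, the negative of the insider's expected
gain `E[X(Z)·(Z − P(X(Z)+Y))]`. -/
theorem kyle_noise_trader_expected_loss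
    {Ω : Type*} [MeasurableSpace Ω] (μpr : Measure Ω) [IsProbabilityMeasure μpr]
    (Z Y : Ω → ℝ) (hZm : Measurable Z) (hYm : Measurable Y)
    (μz σz σy : ℝ) (hσz : 0 < σz) (hσy : 0 < σy)
    (hZ : Measure.map Z μpr = gaussianReal μz (Real.toNNReal (σz ^ 2)))
    (hY : Measure.map Y μpr = gaussianReal 0 (Real.toNNReal (σy ^ 2)))
    (hindep : IndepFun Z Y μpr)
    (X : ℝ → ℝ) (hX : ∀ z, X z = (σy / σz) * (z - μz))
    (P : ℝ → ℝ) (hP : ∀ v, P v = μz + (σz / (2 * σy)) * v) :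
    (∫ ω, Y ω * (Z ω - P (X (Z ω) + Y ω)) ∂μpr) = -(σy * σz / 2) ∧
    (∫ ω, X (Z ω) * (Z ω - P (X (Z ω) + Y ω)) ∂μpr) = σy * σz / 2 := by
  set W : Ω → ℝ := fun ω ↦ Z ω - μz
  have hWlaw : HasLaw W (gaussianReal 0 (σz ^ 2).toNNReal) μpr := by
    simpa using gaussianReal_sub_const ⟨hZm.aemeasurable, hZ⟩ μz
  have hYlaw : HasLaw Y (gaussianReal 0 (σy ^ 2).toNNReal) μpr := ⟨hYm.aemeasurable, hY⟩
  have hW2 : ∫ ω, W ω ^ 2 ∂μpr = σz ^ 2 := by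
    simp [hWlaw.integral_sq_gaussianReal, sq_nonneg]
  have hY2 : ∫ ω, Y ω ^ 2 ∂μpr = σy ^ 2 := by
    simp [hYlaw.integral_sq_gaussianReal, sq_nonneg]
  have hWY : ∫ ω, W ω * Y ω ∂μpr = 0 := by
    have hindepW : IndepFun W Y μpr := hindep.comp (measurable_sub_const μz) measurable_id
    rw [hindepW.integral_fun_mul_eq_mul_integral hWlaw.aemeasurable.aestronglyMeasurable
      hYm.aestronglyMeasurable, hWlaw.integral_eq, integral_id_gaussianReal, zero_mul]
  have hmispricing : ∀ ω, Z ω - P (X (Z ω) + Y ω) = W ω / 2 - σz / (2 * σy) * Y ω := by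
    intro ω
    simp only [hP, hX, W]
    field_simp
    ring
  have hWL2 := hWlaw.hasGaussianLaw.memLp_two
  have hYL2 := hYlaw.hasGaussianLaw.memLp_two
  constructor
  · calc ∫ ω, Y ω * (Z ω - P (X (Z ω) + Y ω)) ∂μpr
        = ∫ ω, (0 * W ω ^ 2 + 1 / 2 * (W ω * Y ω) + -(σz / (2 * σy)) * Y ω ^ 2) ∂μpr := by
          congr 1 with ω; rw [hmispricing]; ring
      _ = -(σy * σz / 2) := by
          rw [integral_quadratic_form hWL2 hYL2, hWY, hY2, zero_mul]; field_simp; ring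
  · calc ∫ ω, X (Z ω) * (Z ω - P (X (Z ω) + Y ω)) ∂μpr
        = ∫ ω, (σy / (2 * σz) * W ω ^ 2 + -(1 / 2) * (W ω * Y ω) + 0 * Y ω ^ 2) ∂μpr := by
          congr 1 with ω; rw [hmispricing, hX]; field_simp; ring
      _ = σy * σz / 2 := by
          rw [integral_quadratic_form hWL2 hYL2, hWY, hW2, zero_mul]; field_simp; ring
end

section
/- Let Z ~ N(μ_z, σ_z²), Y ~ N(0, σ_y²) independent, σ_z, σ_y > 0, and let (X, P) be the Kyle equilibrium X(z) = (σ_y/σ_z)(z − μ_z), P(v) = μ_z + (σ_z/(2σ_y))v. Then for every z and every x' ∈ ℝ, E[(z − P(X(z)+Y))·X(z)] ≥ E[(z − P(x'+Y))·x'], i.e., the equilibrium strategy satisfies the profit-maximization condition pointwise in z. -/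
open MeasureTheory ProbabilityTheory Real
open scoped NNReal

lemma integrable_id_gaussianReal0 (v : ℝ≥0) :
    Integrable id (gaussianReal 0 v) := by
  rcases eq_or_ne v 0 with h | h
  · rw [h, gaussianReal_zero_var]
    have hae : (id : ℝ → ℝ) =ᵐ[Measure.dirac (0:ℝ)] fun _ => (0:ℝ) := by
      rw [MeasureTheory.ae_dirac_eq]
      exact Filter.eventually_pure.2 rfl
    exact (integrable_const (0:ℝ)).congr hae.symm
  · have hv : (0 : ℝ) < v := by positivity
    rw [gaussianReal_of_var_ne_zero _ h, gaussianPDF_def,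
      integrable_withDensity_iff (measurable_gaussianPDFReal 0 v).ennreal_ofReal
        (ae_of_all _ fun x => ENNReal.ofReal_lt_top)]
    simp only [ENNReal.toReal_ofReal (gaussianPDFReal_nonneg 0 v _), id]
    have hb : (0 : ℝ) < (2 * (v : ℝ))⁻¹ := by positivity
    have h1 := (integrable_mul_exp_neg_mul_sq hb).const_mul ((Real.sqrt (2 * π * v))⁻¹)
    refine h1.congr (Filter.Eventually.of_forall fun x => ?_)
    simp only [gaussianPDFReal]
    rw [neg_div, sub_zero]
    ring_nf

lemma integral_id_gaussianReal0 (v : ℝ≥0) :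
    ∫ x, x ∂(gaussianReal 0 v) = 0 := by
  have hmap : (gaussianReal 0 v).map ((-1 : ℝ) * ·) = gaussianReal 0 v := by
    rw [gaussianReal_map_const_mul]
    norm_num
  have h1 : ∫ x, x ∂(gaussianReal 0 v) = ∫ x, (-1 : ℝ) * x ∂(gaussianReal 0 v) := by
    conv_lhs => rw [← hmap]
    rw [integral_map (f := fun x => x) (by fun_prop) measurable_id.aestronglyMeasurable]
  have : ∫ x, (-1 : ℝ) * x ∂(gaussianReal 0 v) = -∫ x, x ∂(gaussianReal 0 v) := by
    simp only [neg_one_mul]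
    exact integral_neg _
  linarith [h1.trans this]

/-- The Kyle equilibrium strategy satisfies profit maximization pointwise in `z`:
for all `z` and alternative order sizes `x'`,
`E[(z − P(X(z)+Y))·X(z)] ≥ E[(z − P(x'+Y))·x']`. -/
theorem kyle_profit_maximization
    {Ω : Type*} [MeasurableSpace Ω] (μpr : Measure Ω) [IsProbabilityMeasure μpr]
    (Z Y : Ω → ℝ) (hZm : Measurable Z) (hYm : Measurable Y)
    (μz σz σy : ℝ) (hσz : 0 < σz) (hσy : 0 < σy)
    (hZ : Measure.map Z μpr = gaussianReal μz (Real.toNNReal (σz ^ 2)))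
    (hY : Measure.map Y μpr = gaussianReal 0 (Real.toNNReal (σy ^ 2)))
    (hindep : IndepFun Z Y μpr)
    (X : ℝ → ℝ) (hX : ∀ z, X z = (σy / σz) * (z - μz))
    (P : ℝ → ℝ) (hP : ∀ v, P v = μz + (σz / (2 * σy)) * v) :
    ∀ z x' : ℝ,
      (∫ ω, (z - P (x' + Y ω)) * x' ∂μpr) ≤
        ∫ ω, (z - P (X z + Y ω)) * X z ∂μpr := by
  intro z x'
  set l : ℝ := σz / (2 * σy) with hl
  -- Y is integrable with mean 0
  have hYint : Integrable Y μpr := by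
    have := integrable_id_gaussianReal0 (Real.toNNReal (σy ^ 2))
    rw [← hY, integrable_map_measure aestronglyMeasurable_id hYm.aemeasurable] at this
    exact this
  have hEY : ∫ ω, Y ω ∂μpr = 0 := by
    have : ∫ x, x ∂(Measure.map Y μpr) = 0 := by
      rw [hY]; exact integral_id_gaussianReal0 _
    rwa [integral_map (f := fun x => x) hYm.aemeasurable measurable_id.aestronglyMeasurable] at this
  -- compute the expected profit for any order size x
  have key : ∀ x : ℝ, ∫ ω, (z - P (x + Y ω)) * x ∂μpr = (z - μz - l * x) * x := by
    intro x
    have heq : ∀ ω, (z - P (x + Y ω)) * x = (z - μz - l * x) * x + (-(l * x)) * Y ω := by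
      intro ω; rw [hP]; ring
    simp_rw [heq]
    rw [integral_add (integrable_const _) (hYint.const_mul _), integral_const,
      integral_const_mul, hEY]
    simp
  rw [key, key, hX]
  rw [← sub_nonneg]
  have h1 : σz ≠ 0 := ne_of_gt hσz
  have h2 : σy ≠ 0 := ne_of_gt hσy
  have hexp : (z - μz - l * ((σy / σz) * (z - μz))) * ((σy / σz) * (z - μz)) -
      (z - μz - l * x') * x' =
      (σy * (z - μz) - σz * x') ^ 2 / (2 * σy * σz) := by
    rw [hl]; field_simp; ring
  rw [hexp]
  positivity
end
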